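/- Soundness of the three-sided sequent calculus CC/TTm: for all sets Γ, Δ of formulae, if Γ ⊢_CC/TTm Δ then Γ ⊨_CC/TT Δ. -/
import Mathlib


inductive Formula : Type
  | var : Nat → Formula
  | neg : Formula → Formula
  | conj : Formula → Formula → Formula
  | impl : Formula → Formula → Formula
deriving DecidableEq

inductive TV : Type
  | zero
  | half
  | one
deriving DecidableEq

/-- Strong Kleene negation: 0↦1, ½↦½, 1↦0. -/
def tneg : TV → TV
  | .zero => .one
  | .half => .half
  | .one => .zero

/-- min on {0,½,1}. -/
def tmin : TV → TV → TV
  | .zero, _ => .zero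
  | .half, .zero => .zero
  | .half, .half => .half
  | .half, .one => .half
  | .one, b => b

/-- Designated values: ½ and 1. -/
def designated (x : TV) : Prop := x = TV.half ∨ x = TV.one

/-- The Cooper–Cantwell conditional table: f_CC(x,y) = y if x ∈ {½,1}, and ½ if x = 0. -/
def fCC : TV → TV → TV
  | .zero, _ => .half
  | .half, b => b
  | .one, b => b

/-- A CC-evaluation. -/
def IsCCEval (v : Formula → TV) : Prop :=
  (∀ A, v (.neg A) = tneg (v A)) ∧
  (∀ A B, v (.conj A B) = tmin (v A) (v B)) ∧
  (∀ A B, v (.impl A B) = fCC (v A) (v B))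

/-- TT-validity: Γ ⊨_CC/TT A. -/
def CCConsequence (Γ : Set Formula) (A : Formula) : Prop :=
  ∀ v : Formula → TV, IsCCEval v → (∀ B ∈ Γ, designated (v B)) → designated (v A)

/-- The three-sided sequent calculus: `CCm X Y Z` says that the sequent
X | Y | Z is derivable. -/
inductive CCm : Set Formula → Set Formula → Set Formula → Prop
  | ax (X Y Z : Set Formula) (A : Formula) :
      CCm (insert A X) (insert A Y) (insert A Z)
  | neg0 (X Y Z : Set Formula) (A : Formula) :
      CCm X Y (insert A Z) → CCm (insert (.neg A) X) Y Z
  | negH (X Y Z : Set Formula) (A : Formula) :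
      CCm X (insert A Y) Z → CCm X (insert (.neg A) Y) Z
  | neg1 (X Y Z : Set Formula) (A : Formula) :
      CCm (insert A X) Y Z → CCm X Y (insert (.neg A) Z)
  | conj0 (X Y Z : Set Formula) (A B : Formula) :
      CCm (insert A (insert B X)) Y Z → CCm (insert (.conj A B) X) Y Z
  | conjH (X Y Z : Set Formula) (A B : Formula) :
      CCm X (insert A Y) (insert B Z) → CCm X (insert B Y) (insert A Z) →
      CCm X (insert A (insert B Y)) Z → CCm X (insert (.conj A B) Y) Z
  | conj1 (X Y Z : Set Formula) (A B : Formula) :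
      CCm X Y (insert A Z) → CCm X Y (insert B Z) →
      CCm X Y (insert (.conj A B) Z)
  | imp0 (X Y Z : Set Formula) (A B : Formula) :
      CCm X (insert A Y) (insert A Z) → CCm (insert B X) Y Z →
      CCm (insert (.impl A B) X) Y Z
  | impH (X Y Z : Set Formula) (A B : Formula) :
      CCm (insert A X) (insert B Y) Z → CCm X (insert (.impl A B) Y) Z
  | imp1 (X Y Z : Set Formula) (A B : Formula) :
      CCm X (insert A Y) (insert A Z) → CCm X Y (insert B Z) →
      CCm X Y (insert (.impl A B) Z)

/-- Multiple-conclusion TT-validity: Γ ⊨_CC/TT Δ. -/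
def CCMultiCons (Γ Δ : Set Formula) : Prop :=
  ∀ v : Formula → TV, IsCCEval v → (∀ B ∈ Γ, designated (v B)) →
    ∃ A ∈ Δ, designated (v A)

lemma ccm_sound {X Y Z : Set Formula} (h : CCm X Y Z) :
    ∀ v : Formula → TV, IsCCEval v →
      (∃ A ∈ X, v A = TV.zero) ∨ (∃ A ∈ Y, v A = TV.half) ∨ (∃ A ∈ Z, v A = TV.one) := by
  induction h with
  | ax X Y Z A =>
      intro v _
      cases hA : v A
      · exact Or.inl ⟨A, Set.mem_insert _ _, hA⟩
      · exact Or.inr (Or.inl ⟨A, Set.mem_insert _ _, hA⟩)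
      · exact Or.inr (Or.inr ⟨A, Set.mem_insert _ _, hA⟩)
  | neg0 X Y Z A _ ih =>
      intro v hv
      obtain ⟨hn, hc, hi⟩ := hv
      by_contra hcon
      push_neg at hcon
      obtain ⟨h0, hH, h1⟩ := hcon
      have hnA := h0 _ (Set.mem_insert _ _)
      rw [hn] at hnA
      rcases ih v ⟨hn, hc, hi⟩ with ⟨C, hC, h⟩ | ⟨C, hC, h⟩ | ⟨C, hC, h⟩
      · exact h0 C (Set.mem_insert_of_mem _ hC) h
      · exact hH C hC h
      · rcases hC with rfl | hC
        · simp [h, tneg] at hnA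
        · exact h1 C hC h
  | negH X Y Z A _ ih =>
      intro v hv
      obtain ⟨hn, hc, hi⟩ := hv
      by_contra hcon
      push_neg at hcon
      obtain ⟨h0, hH, h1⟩ := hcon
      have hnA := hH _ (Set.mem_insert _ _)
      rw [hn] at hnA
      rcases ih v ⟨hn, hc, hi⟩ with ⟨C, hC, h⟩ | ⟨C, hC, h⟩ | ⟨C, hC, h⟩
      · exact h0 C hC h
      · rcases hC with rfl | hC
        · simp [h, tneg] at hnA
        · exact hH C (Set.mem_insert_of_mem _ hC) h
      · exact h1 C hC h
  | neg1 X Y Z A _ ih =>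
      intro v hv
      obtain ⟨hn, hc, hi⟩ := hv
      by_contra hcon
      push_neg at hcon
      obtain ⟨h0, hH, h1⟩ := hcon
      have hnA := h1 _ (Set.mem_insert _ _)
      rw [hn] at hnA
      rcases ih v ⟨hn, hc, hi⟩ with ⟨C, hC, h⟩ | ⟨C, hC, h⟩ | ⟨C, hC, h⟩
      · rcases hC with rfl | hC
        · simp [h, tneg] at hnA
        · exact h0 C hC h
      · exact hH C hC h
      · exact h1 C (Set.mem_insert_of_mem _ hC) h
  | conj0 X Y Z A B _ ih =>
      intro v hv
      obtain ⟨hn, hc, hi⟩ := hv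
      by_contra hcon
      push_neg at hcon
      obtain ⟨h0, hH, h1⟩ := hcon
      have hAB := h0 _ (Set.mem_insert _ _)
      rw [hc] at hAB
      rcases ih v ⟨hn, hc, hi⟩ with ⟨C, hC, h⟩ | ⟨C, hC, h⟩ | ⟨C, hC, h⟩
      · rcases hC with rfl | hC
        · simp [h, tmin] at hAB
        · rcases hC with rfl | hC
          · cases hA : v A <;> simp [hA, h, tmin] at hAB
          · exact h0 C (Set.mem_insert_of_mem _ hC) h
      · exact hH C hC h
      · exact h1 C hC h
  | conj1 X Y Z A B _ _ ih1 ih2 =>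
      intro v hv
      obtain ⟨hn, hc, hi⟩ := hv
      by_contra hcon
      push_neg at hcon
      obtain ⟨h0, hH, h1⟩ := hcon
      have hAB := h1 _ (Set.mem_insert _ _)
      rw [hc] at hAB
      have useA : v A ≠ TV.one ∨ v B ≠ TV.one := by
        cases hA : v A <;> cases hB : v B <;> simp [hA, hB, tmin] at hAB ⊢
      rcases useA with hA | hB
      · rcases ih1 v ⟨hn, hc, hi⟩ with ⟨C, hC, h⟩ | ⟨C, hC, h⟩ | ⟨C, hC, h⟩
        · exact h0 C hC h
        · exact hH C hC h
        · rcases hC with rfl | hC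
          · exact hA h
          · exact h1 C (Set.mem_insert_of_mem _ hC) h
      · rcases ih2 v ⟨hn, hc, hi⟩ with ⟨C, hC, h⟩ | ⟨C, hC, h⟩ | ⟨C, hC, h⟩
        · exact h0 C hC h
        · exact hH C hC h
        · rcases hC with rfl | hC
          · exact hB h
          · exact h1 C (Set.mem_insert_of_mem _ hC) h
  | conjH X Y Z A B _ _ _ ih1 ih2 ih3 =>
      intro v hv
      obtain ⟨hn, hc, hi⟩ := hv
      by_contra hcon
      push_neg at hcon
      obtain ⟨h0, hH, h1⟩ := hcon
      have hAB := hH _ (Set.mem_insert _ _)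
      rw [hc] at hAB
      -- use ih1 when (v A ≠ half and v B ≠ one); ih2 when (v B ≠ half and v A ≠ one);
      -- ih3 when (v A ≠ half and v B ≠ half)
      have key : (v A ≠ TV.half ∧ v B ≠ TV.one) ∨ (v B ≠ TV.half ∧ v A ≠ TV.one) ∨
          (v A ≠ TV.half ∧ v B ≠ TV.half) := by
        cases hA : v A <;> cases hB : v B <;> simp [hA, hB, tmin] at hAB ⊢
      rcases key with ⟨hA, hB⟩ | ⟨hB, hA⟩ | ⟨hA, hB⟩
      · rcases ih1 v ⟨hn, hc, hi⟩ with ⟨C, hC, h⟩ | ⟨C, hC, h⟩ | ⟨C, hC, h⟩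
        · exact h0 C hC h
        · rcases hC with rfl | hC
          · exact hA h
          · exact hH C (Set.mem_insert_of_mem _ hC) h
        · rcases hC with rfl | hC
          · exact hB h
          · exact h1 C hC h
      · rcases ih2 v ⟨hn, hc, hi⟩ with ⟨C, hC, h⟩ | ⟨C, hC, h⟩ | ⟨C, hC, h⟩
        · exact h0 C hC h
        · rcases hC with rfl | hC
          · exact hB h
          · exact hH C (Set.mem_insert_of_mem _ hC) h
        · rcases hC with rfl | hC
          · exact hA h
          · exact h1 C hC h
      · rcases ih3 v ⟨hn, hc, hi⟩ with ⟨C, hC, h⟩ | ⟨C, hC, h⟩ | ⟨C, hC, h⟩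
        · exact h0 C hC h
        · rcases hC with rfl | hC
          · exact hA h
          · rcases hC with rfl | hC
            · exact hB h
            · exact hH C (Set.mem_insert_of_mem _ hC) h
        · exact h1 C hC h
  | imp0 X Y Z A B _ _ ih1 ih2 =>
      intro v hv
      obtain ⟨hn, hc, hi⟩ := hv
      by_contra hcon
      push_neg at hcon
      obtain ⟨h0, hH, h1⟩ := hcon
      have hAB := h0 _ (Set.mem_insert _ _)
      rw [hi] at hAB
      by_cases hA : v A = TV.zero
      · rcases ih1 v ⟨hn, hc, hi⟩ with ⟨C, hC, h⟩ | ⟨C, hC, h⟩ | ⟨C, hC, h⟩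
        · exact h0 C (Set.mem_insert_of_mem _ hC) h
        · rcases hC with rfl | hC
          · rw [hA] at h; exact absurd h (by simp)
          · exact hH C hC h
        · rcases hC with rfl | hC
          · rw [hA] at h; exact absurd h (by simp)
          · exact h1 C hC h
      · have hB : v B ≠ TV.zero := by
          cases hA' : v A <;> simp [hA'] at hA hAB ⊢ <;> simpa [fCC, hA'] using hAB
        rcases ih2 v ⟨hn, hc, hi⟩ with ⟨C, hC, h⟩ | ⟨C, hC, h⟩ | ⟨C, hC, h⟩
        · rcases hC with rfl | hC
          · exact hB h
          · exact h0 C (Set.mem_insert_of_mem _ hC) h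
        · exact hH C hC h
        · exact h1 C hC h
  | impH X Y Z A B _ ih =>
      intro v hv
      obtain ⟨hn, hc, hi⟩ := hv
      by_contra hcon
      push_neg at hcon
      obtain ⟨h0, hH, h1⟩ := hcon
      have hAB := hH _ (Set.mem_insert _ _)
      rw [hi] at hAB
      have hA : v A ≠ TV.zero := by intro h; simp [h, fCC] at hAB
      have hB : v B ≠ TV.half := by
        cases hA' : v A <;> simp [hA'] at hA hAB ⊢ <;> simpa [fCC, hA'] using hAB
      rcases ih v ⟨hn, hc, hi⟩ with ⟨C, hC, h⟩ | ⟨C, hC, h⟩ | ⟨C, hC, h⟩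
      · rcases hC with rfl | hC
        · exact hA h
        · exact h0 C hC h
      · rcases hC with rfl | hC
        · exact hB h
        · exact hH C (Set.mem_insert_of_mem _ hC) h
      · exact h1 C hC h
  | imp1 X Y Z A B _ _ ih1 ih2 =>
      intro v hv
      obtain ⟨hn, hc, hi⟩ := hv
      by_contra hcon
      push_neg at hcon
      obtain ⟨h0, hH, h1⟩ := hcon
      have hAB := h1 _ (Set.mem_insert _ _)
      rw [hi] at hAB
      by_cases hA : v A = TV.zero
      · rcases ih1 v ⟨hn, hc, hi⟩ with ⟨C, hC, h⟩ | ⟨C, hC, h⟩ | ⟨C, hC, h⟩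
        · exact h0 C hC h
        · rcases hC with rfl | hC
          · rw [hA] at h; exact absurd h (by simp)
          · exact hH C hC h
        · rcases hC with rfl | hC
          · rw [hA] at h; exact absurd h (by simp)
          · exact h1 C (Set.mem_insert_of_mem _ hC) h
      · have hB : v B ≠ TV.one := by
          cases hA' : v A <;> simp [hA'] at hA hAB ⊢ <;> simpa [fCC, hA'] using hAB
        rcases ih2 v ⟨hn, hc, hi⟩ with ⟨C, hC, h⟩ | ⟨C, hC, h⟩ | ⟨C, hC, h⟩
        · exact h0 C hC h
        · exact hH C hC h
        · rcases hC with rfl | hC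
          · exact hB h
          · exact h1 C (Set.mem_insert_of_mem _ hC) h

/-- Soundness of the three-sided sequent calculus CC/TTm: if Γ ⊢_CC/TTm Δ (i.e. the
sequent Γ | Δ | Δ is derivable) then Γ ⊨_CC/TT Δ. -/
theorem ccttm_soundness (Γ Δ : Set Formula) :
    CCm Γ Δ Δ → CCMultiCons Γ Δ := by
  intro h v hv hΓ
  rcases ccm_sound h v hv with ⟨A, hA, h0⟩ | ⟨A, hA, h⟩ | ⟨A, hA, h⟩
  · rcases hΓ A hA with hd | hd <;> rw [h0] at hd <;> exact absurd hd (by simp)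
  · exact ⟨A, hA, Or.inl h⟩
  · exact ⟨A, hA, Or.inr h⟩
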